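/- Under the Shared-Permutations protocol with F^in = ∅ and |F^d| ≤ ε·n, a fixed packet p with destination d reaches the destination within at most C_1 hops with probability at least 1 − n^{−3}, where C_1 is a value bounded above by 5 log_{1/ε} n. -/

import Mathlib

/-!
Call the packet stuck until time `t` if it sits at a bad node at each of the times `0, …, t`.
Given the first `t` orders, the order `π_t` is still uniform, and the cyclic successor of a
fixed node `v` under a uniform order is uniform over the `n - 2` nodes other than `v` and `d`
(a transposition of two candidates exchanges their fibres). So every further step keeps the
packet at a bad node with probability at most `|VB| / (n - 2) ≤ ε^{3/4}` once `n` is large,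
and the packet is stuck for `m ≥ 4 log_{1/ε} n` steps with probability at most
`ε^{3m/4} ≤ n⁻³`. Then `C₁ = m + 1 ≤ 5 log_{1/ε} n` as soon as `log_{1/ε} n ≥ 2`.
-/

open scoped Classical
open Finset

noncomputable section

abbrev NodeOrder (n : ℕ) (d : Fin n) : Type := Fin (n - 1) ≃ {v : Fin n // v ≠ d}

def unifProb {Ω : Type*} [Fintype Ω] (P : Ω → Prop) : ℝ :=
  ((Finset.univ : Finset Ω).filter P).card / (Fintype.card Ω : ℝ)

def cycSucc {n : ℕ} {d : Fin n} (π : NodeOrder n d) (v : Fin n) : Fin n :=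
  if h : v ≠ d then
    (π ⟨((π.symm ⟨v, h⟩).val + 1) % (n - 1), Nat.mod_lt _ (π.symm ⟨v, h⟩).pos⟩).1
  else v

def routeSP {n M : ℕ} {d : Fin n} (VB : Finset (Fin n))
    (g : Fin M → NodeOrder n d) (s : Fin n) : ℕ → Fin n
  | 0 => s
  | t + 1 =>
      let v := routeSP VB g s t
      if v = d then d
      else if v ∉ VB then d
      else if h : t < M then cycSucc (g ⟨t, h⟩) v else v

section UnifProb

variable {Ω : Type*} [Fintype Ω]

lemma unifProb_mono {P Q : Ω → Prop} (h : ∀ ω, P ω → Q ω) :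
    unifProb P ≤ unifProb Q := by
  unfold unifProb
  gcongr with ω _
  exact h ω

lemma unifProb_eq_one_sub_unifProb_not [Nonempty Ω] (P : Ω → Prop) :
    unifProb P = 1 - unifProb (fun ω => ¬ P ω) := by
  have hcard : (0 : ℝ) < Fintype.card Ω := by exact_mod_cast Fintype.card_pos
  rw [unifProb, unifProb, eq_sub_iff_add_eq, ← add_div, div_eq_one_iff_eq hcard.ne',
    ← Nat.cast_add, card_filter_add_card_filter_not, card_univ]

end UnifProb

/-- The counting form of `ℙ(Q | P) ≤ k / c`, checked on the fibres of the coordinate `i`. -/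
theorem card_filter_mul_le_of_fiberwise {ι α : Type*} [Fintype ι] [DecidableEq ι] [Fintype α]
    (i : ι) {P Q : (ι → α) → Prop} {c k : ℕ}
    (hP : ∀ g g' : ι → α, (∀ j ≠ i, g j = g' j) → (P g ↔ P g'))
    (hQP : ∀ g, Q g → P g)
    (hfiber : ∀ g, P g → c * #{a | Q (Function.update g i a)} ≤ k * Fintype.card α) :
    c * #{g | Q g} ≤ k * #{g | P g} := by
  set e := Equiv.funSplitAt i α
  have he : ∀ a a' h, e.symm (a, h) = Function.update (e.symm (a', h)) i a := by
    intro a a' h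
    funext j
    by_cases hj : j = i
    · subst hj; simp [e, Equiv.funSplitAt, Equiv.piSplitAt]
    · simp [e, Equiv.funSplitAt, Equiv.piSplitAt, hj]
  have hsplit : ∀ R : (ι → α) → Prop, #{g | R g} = ∑ h, #{a | R (e.symm (a, h))} := by
    intro R
    simp only [card_filter]
    rw [← e.symm.sum_comp, Fintype.sum_prod_type, sum_comm]
  rw [hsplit Q, hsplit P, mul_sum, mul_sum]
  refine sum_le_sum fun h _ => ?_
  by_cases hh : ∃ a₀, P (e.symm (a₀, h))
  · obtain ⟨a₀, ha₀⟩ := hh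
    have hPall : ∀ a, P (e.symm (a, h)) := fun a =>
      (hP _ _ fun j hj => by rw [he a a₀, Function.update_of_ne hj]).2 ha₀
    have hQfiber :
        #{a | Q (e.symm (a, h))} = #{a | Q (Function.update (e.symm (a₀, h)) i a)} := by
      simp only [← he]
    rw [hQfiber, filter_true_of_mem fun a _ => hPall a, card_univ]
    exact hfiber _ ha₀
  · push Not at hh
    simp [fun a => mt (hQP _) (hh a)]

lemma cast_sub_two_pos {n : ℕ} (hn : 3 ≤ n) : (0 : ℝ) < n - 2 := by
  have : (3 : ℝ) ≤ n := by exact_mod_cast hn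
  linarith

section CycSucc

variable {n : ℕ} {d : Fin n}

lemma card_ne_dest : Fintype.card {v : Fin n // v ≠ d} = n - 1 := by
  simp [Fintype.card_subtype_compl]

instance : Nonempty (NodeOrder n d) :=
  Fintype.card_eq.mp (by rw [Fintype.card_fin, card_ne_dest])

lemma cycSucc_ne_dest (π : NodeOrder n d) {v : Fin n} (hv : v ≠ d) : cycSucc π v ≠ d := by
  rw [cycSucc, dif_pos hv]
  exact (π _).2

lemma cycSucc_ne_self (hn : 3 ≤ n) (π : NodeOrder n d) {v : Fin n} (hv : v ≠ d) :
    cycSucc π v ≠ v := by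
  rw [cycSucc, dif_pos hv]
  intro h
  set k := π.symm ⟨v, hv⟩
  have hk : π ⟨(k.val + 1) % (n - 1), Nat.mod_lt _ k.pos⟩ = π k := by
    rw [Equiv.apply_symm_apply]
    exact Subtype.ext h
  have hmod : (k.val + 1) % (n - 1) = k.val := congrArg Fin.val (π.injective hk)
  have hlt : k.val < n - 1 := k.isLt
  rcases Nat.lt_or_ge (k.val + 1) (n - 1) with hsucc | hsucc
  · rw [Nat.mod_eq_of_lt hsucc] at hmod
    omega
  · rw [show k.val + 1 = n - 1 by omega, Nat.mod_self] at hmod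
    omega

lemma cycSucc_trans (π : NodeOrder n d) (σ : Equiv.Perm {v : Fin n // v ≠ d})
    {v : Fin n} (hv : v ≠ d) (hσ : σ ⟨v, hv⟩ = ⟨v, hv⟩) :
    cycSucc (π.trans σ) v = σ ⟨cycSucc π v, cycSucc_ne_dest π hv⟩ := by
  have hσ' : σ.symm ⟨v, hv⟩ = ⟨v, hv⟩ := by rw [Equiv.symm_apply_eq, hσ]
  simp only [cycSucc, dif_pos hv, Equiv.symm_trans_apply, hσ', Equiv.trans_apply]

lemma card_cycSucc_eq_congr {v w w' : Fin n} (hv : v ≠ d) (hw : w ≠ d) (hw' : w' ≠ d)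
    (hwv : w ≠ v) (hw'v : w' ≠ v) :
    #{π : NodeOrder n d | cycSucc π v = w} = #{π : NodeOrder n d | cycSucc π v = w'} := by
  set σ := Equiv.swap (⟨w, hw⟩ : {x : Fin n // x ≠ d}) ⟨w', hw'⟩
  have hσv : σ ⟨v, hv⟩ = ⟨v, hv⟩ :=
    Equiv.swap_apply_of_ne_of_ne (fun h => hwv (congrArg Subtype.val h).symm)
      (fun h => hw'v (congrArg Subtype.val h).symm)
  refine card_equiv ((Equiv.refl _).equivCongr σ) fun π => ?_
  simp only [mem_filter, mem_univ, true_and, Equiv.equivCongr_refl_left]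
  rw [cycSucc_trans π σ hv hσv]
  change _ ↔ ((σ _ : {x // x ≠ d}) : Fin n) = ((⟨w', hw'⟩ : {x // x ≠ d}) : Fin n)
  rw [← Subtype.ext_iff, ← σ.eq_symm_apply, Equiv.symm_swap, Equiv.swap_apply_right,
    Subtype.ext_iff]

def succCandidates (d v : Fin n) : Finset (Fin n) := {w | w ≠ d ∧ w ≠ v}

lemma card_succCandidates {v : Fin n} (hv : v ≠ d) : #(succCandidates d v) = n - 2 := by
  have h : succCandidates d v = (univ.erase d).erase v := by
    ext w
    simp [succCandidates, and_comm]
  rw [h, card_erase_of_mem (by simpa using hv), card_erase_of_mem (mem_univ d), card_univ,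
    Fintype.card_fin]
  omega

lemma cycSucc_mem_succCandidates (hn : 3 ≤ n) (π : NodeOrder n d) {v : Fin n} (hv : v ≠ d) :
    cycSucc π v ∈ succCandidates d v := by
  simp [succCandidates, cycSucc_ne_dest π hv, cycSucc_ne_self hn π hv]

lemma card_cycSucc_eq (hn : 3 ≤ n) {v w : Fin n} (hv : v ≠ d) (hw : w ∈ succCandidates d v) :
    (n - 2) * #{π : NodeOrder n d | cycSucc π v = w} = Fintype.card (NodeOrder n d) := by
  have hconst : ∀ w' ∈ succCandidates d v,
      #{π ∈ (univ : Finset (NodeOrder n d)) | cycSucc π v = w'} =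
        #{π : NodeOrder n d | cycSucc π v = w} := by
    intro w' hw'
    simp only [succCandidates, mem_filter, mem_univ, true_and] at hw hw'
    exact card_cycSucc_eq_congr hv hw'.1 hw.1 hw'.2 hw.2
  rw [← card_univ, card_eq_sum_card_fiberwise (s := univ) fun π _ =>
    cycSucc_mem_succCandidates hn π hv, sum_congr rfl hconst, sum_const, smul_eq_mul,
    card_succCandidates hv]

lemma card_cycSucc_mem_le (hn : 3 ≤ n) {v : Fin n} (hv : v ≠ d) (B : Finset (Fin n)) :
    (n - 2) * #{π : NodeOrder n d | cycSucc π v ∈ B} ≤ #B * Fintype.card (NodeOrder n d) := by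
  have hfib : #{π : NodeOrder n d | cycSucc π v ∈ B} =
      ∑ w ∈ B ∩ succCandidates d v, #{π : NodeOrder n d | cycSucc π v = w} := by
    rw [card_eq_sum_card_fiberwise fun π hπ =>
      mem_inter.2 ⟨(mem_filter.1 hπ).2, cycSucc_mem_succCandidates hn π hv⟩]
    refine sum_congr rfl fun w hw => congrArg card ?_
    ext π
    simp only [mem_filter, mem_univ, true_and, and_iff_right_iff_imp]
    rintro rfl
    exact (mem_inter.1 hw).1
  calc (n - 2) * #{π : NodeOrder n d | cycSucc π v ∈ B}
      = ∑ w ∈ B ∩ succCandidates d v, Fintype.card (NodeOrder n d) := by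
        rw [hfib, mul_sum]
        exact sum_congr rfl fun w hw => card_cycSucc_eq hn hv (mem_inter.1 hw).2
    _ ≤ #B * Fintype.card (NodeOrder n d) := by
        rw [sum_const, smul_eq_mul]
        exact Nat.mul_le_mul_right _ (card_le_card inter_subset_left)

end CycSucc

section Route

variable {n M : ℕ} {d : Fin n} {VB : Finset (Fin n)}

lemma routeSP_congr {g g' : Fin M → NodeOrder n d} (s : Fin n) {t : ℕ}
    (h : ∀ j : Fin M, j.1 < t → g j = g' j) : routeSP VB g s t = routeSP VB g' s t := by
  induction t with
  | zero => rfl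
  | succ t ih =>
    simp only [routeSP, ih fun j hj => h j (Nat.lt_succ_of_lt hj)]
    split_ifs <;> first | rfl | rw [h ⟨t, ‹_›⟩ (Nat.lt_succ_self t)]

lemma routeSP_succ_eq_dest_of_notMem (g : Fin M → NodeOrder n d) (s : Fin n) {t : ℕ}
    (h : routeSP VB g s t ∉ VB) : routeSP VB g s (t + 1) = d := by
  simp [routeSP, h]

lemma routeSP_succ_of_mem (hd : d ∉ VB) (g : Fin M → NodeOrder n d) (s : Fin n) {t : ℕ}
    (ht : t < M) (h : routeSP VB g s t ∈ VB) :
    routeSP VB g s (t + 1) = cycSucc (g ⟨t, ht⟩) (routeSP VB g s t) := by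
  simp [routeSP, ne_of_mem_of_not_mem h hd, h, ht]

lemma routeSP_eq_dest_of_le (g : Fin M → NodeOrder n d) (s : Fin n) {t u : ℕ}
    (h : routeSP VB g s t = d) (htu : t ≤ u) : routeSP VB g s u = d := by
  induction u, htu using Nat.le_induction with
  | base => exact h
  | succ u _ ih => simp [routeSP, ih]

lemma routeSP_mem_of_ne_dest (g : Fin M → NodeOrder n d) (s : Fin n) {u : ℕ}
    (h : routeSP VB g s u ≠ d) {i : ℕ} (hi : i < u) : routeSP VB g s i ∈ VB := by
  by_contra hi'
  exact h (routeSP_eq_dest_of_le g s (routeSP_succ_eq_dest_of_notMem g s hi') hi)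

def StuckUntil (VB : Finset (Fin n)) (g : Fin M → NodeOrder n d) (s : Fin n) (t : ℕ) : Prop :=
  ∀ i ≤ t, routeSP VB g s i ∈ VB

lemma stuckUntil_succ_iff {g : Fin M → NodeOrder n d} {s : Fin n} {t : ℕ} :
    StuckUntil VB g s (t + 1) ↔ StuckUntil VB g s t ∧ routeSP VB g s (t + 1) ∈ VB := by
  simp only [StuckUntil, Nat.le_succ_iff, or_imp, forall_and, forall_eq]

lemma stuckUntil_congr {g g' : Fin M → NodeOrder n d} (s : Fin n) {t : ℕ}
    (h : ∀ j : Fin M, j.1 < t → g j = g' j) :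
    StuckUntil VB g s t ↔ StuckUntil VB g' s t := by
  refine forall₂_congr fun i hi => ?_
  rw [routeSP_congr s fun j hj => h j (lt_of_lt_of_le hj hi)]

/-- Given the orders before time `t`, the order `g t` is still uniform, so the successor of the
current bad node is bad with conditional probability at most `|VB| / (n - 2)`. -/
lemma card_stuckUntil_succ_le (hn : 3 ≤ n) (hd : d ∉ VB) (s : Fin n) {t : ℕ} (ht : t < M) :
    (n - 2) * #{g : Fin M → NodeOrder n d | StuckUntil VB g s (t + 1)} ≤
      #VB * #{g : Fin M → NodeOrder n d | StuckUntil VB g s t} := by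
  refine card_filter_mul_le_of_fiberwise ⟨t, ht⟩
    (fun g g' h => stuckUntil_congr s fun j hj => h j (Fin.ne_of_val_ne hj.ne))
    (fun g h => (stuckUntil_succ_iff.1 h).1) fun g hg => ?_
  have hpast : ∀ a, ∀ i ≤ t,
      routeSP VB (Function.update g ⟨t, ht⟩ a) s i = routeSP VB g s i := fun a i hi =>
    routeSP_congr s fun j hj =>
      Function.update_of_ne (Fin.ne_of_val_ne (show j.1 ≠ t by omega)) _ _
  have hfiber : ∀ a, StuckUntil VB (Function.update g ⟨t, ht⟩ a) s (t + 1) ↔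
      cycSucc a (routeSP VB g s t) ∈ VB := by
    intro a
    have hstuck : StuckUntil VB (Function.update g ⟨t, ht⟩ a) s t := fun i hi => by
      rw [hpast a i hi]
      exact hg i hi
    rw [stuckUntil_succ_iff, routeSP_succ_of_mem hd _ s ht (hstuck t le_rfl),
      Function.update_self, hpast a t le_rfl]
    exact and_iff_right hstuck
  simp only [hfiber]
  exact card_cycSucc_mem_le hn (ne_of_mem_of_not_mem (hg t le_rfl) hd) VB

lemma card_stuckUntil_le (hn : 3 ≤ n) (hd : d ∉ VB) (s : Fin n) {t : ℕ} (ht : t < M) :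
    (n - 2) ^ t * #{g : Fin M → NodeOrder n d | StuckUntil VB g s t} ≤
      #VB ^ t * Fintype.card (Fin M → NodeOrder n d) := by
  induction t with
  | zero => simpa using card_filter_le (univ : Finset (Fin M → NodeOrder n d)) _
  | succ t ih =>
    calc (n - 2) ^ (t + 1) * #{g : Fin M → NodeOrder n d | StuckUntil VB g s (t + 1)}
        = (n - 2) ^ t * ((n - 2) * #{g : Fin M → NodeOrder n d | StuckUntil VB g s (t + 1)}) := by
          ring
      _ ≤ (n - 2) ^ t * (#VB * #{g : Fin M → NodeOrder n d | StuckUntil VB g s t}) :=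
          Nat.mul_le_mul_left _ (card_stuckUntil_succ_le hn hd s (by omega))
      _ = #VB * ((n - 2) ^ t * #{g : Fin M → NodeOrder n d | StuckUntil VB g s t}) := by ring
      _ ≤ #VB * (#VB ^ t * Fintype.card (Fin M → NodeOrder n d)) :=
          Nat.mul_le_mul_left _ (ih (by omega))
      _ = #VB ^ (t + 1) * Fintype.card (Fin M → NodeOrder n d) := by ring

end Route

lemma one_sub_pow_le_unifProb_routeSP_eq_dest {n : ℕ} {d : Fin n} {VB : Finset (Fin n)}
    (hn : 3 ≤ n) (hd : d ∉ VB) (s : Fin n) (m : ℕ) :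
    1 - (#VB / ((n : ℝ) - 2)) ^ m ≤
      unifProb (fun g : Fin (m + 1) → NodeOrder n d => routeSP VB g s (m + 1) = d) := by
  have hcard : (0 : ℝ) < Fintype.card (Fin (m + 1) → NodeOrder n d) := by
    exact_mod_cast Fintype.card_pos
  have hstuck : unifProb (fun g : Fin (m + 1) → NodeOrder n d => StuckUntil VB g s m) ≤
      (#VB / ((n : ℝ) - 2)) ^ m := by
    have hcount := card_stuckUntil_le hn hd s (Nat.lt_succ_self m)
    rw [unifProb, div_pow, div_le_div_iff₀ hcard (pow_pos (cast_sub_two_pos hn) m)]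
    have hcast : (n : ℝ) - 2 = ((n - 2 : ℕ) : ℝ) := by
      rw [Nat.cast_sub (by omega), Nat.cast_ofNat]
    rw [hcast]
    exact_mod_cast (mul_comm _ _).trans_le hcount
  rw [unifProb_eq_one_sub_unifProb_not]
  gcongr
  refine le_trans (unifProb_mono fun g hg i hi => ?_) hstuck
  exact routeSP_mem_of_ne_dest g s hg (Nat.lt_succ_of_le hi)

open Filter

lemma pow_le_one_div_pow_of_le_rpow {ε q a x : ℝ} {k m : ℕ} (hε0 : 0 < ε) (hε1 : ε < 1)
    (hq0 : 0 ≤ q) (hq : q ≤ ε ^ a) (hx : 0 < x) (hm : k * Real.logb (1 / ε) x ≤ a * m) :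
    q ^ m ≤ 1 / x ^ k := by
  have hεL : ε ^ Real.logb (1 / ε) x = 1 / x := by
    nth_rewrite 1 [show ε = (1 / ε)⁻¹ by rw [one_div, inv_inv]]
    rw [Real.inv_rpow (by positivity),
      Real.rpow_logb (by positivity) (one_lt_one_div hε0 hε1).ne' hx, one_div]
  calc q ^ m ≤ (ε ^ a) ^ m := pow_le_pow_left₀ hq0 hq m
    _ = ε ^ (a * m) := by rw [Real.rpow_mul_natCast hε0.le]
    _ ≤ ε ^ (Real.logb (1 / ε) x * k) :=
        Real.rpow_le_rpow_of_exponent_ge hε0 hε1.le (by linarith)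
    _ = 1 / x ^ k := by rw [Real.rpow_mul_natCast hε0.le, hεL, one_div_pow]

lemma eventually_mul_le_mul_sub {ε ρ : ℝ} (h : ε < ρ) (c : ℝ) :
    ∀ᶠ x : ℝ in atTop, ε * x ≤ ρ * (x - c) := by
  filter_upwards [(tendsto_id.const_mul_atTop (sub_pos.2 h)).eventually_ge_atTop (ρ * c)]
    with x hx
  simp only [id] at hx
  linarith

theorem shared_permutations_few_hops (ε : ℝ) (hε0 : 0 < ε) (hε1 : ε < 1) :
    ∃ N : ℕ, ∀ n : ℕ, N ≤ n →
      ∀ (d : Fin n) (VB : Finset (Fin n)), d ∉ VB → (VB.card : ℝ) ≤ ε * n →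
        ∃ C1 : ℕ, (C1 : ℝ) ≤ 5 * Real.logb (1 / ε) n ∧
          ∀ s : Fin n,
            1 - 1 / (n : ℝ) ^ 3 ≤
              unifProb (fun g : Fin C1 → NodeOrder n d =>
                routeSP VB g s C1 = d) := by
  have hρ : ε < ε ^ (3 / 4 : ℝ) := Real.self_lt_rpow_of_lt_one hε0 hε1 (by norm_num)
  have hlogb : Tendsto (fun n : ℕ => Real.logb (1 / ε) n) atTop atTop :=
    (Real.tendsto_logb_atTop (one_lt_one_div hε0 hε1)).comp tendsto_natCast_atTop_atTop
  obtain ⟨N, hN⟩ := eventually_atTop.1 ((eventually_ge_atTop 3).and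
    ((hlogb.eventually_ge_atTop 2).and
      (tendsto_natCast_atTop_atTop.eventually (eventually_mul_le_mul_sub hρ 2))))
  refine ⟨N, fun n hn d VB hd hVB => ?_⟩
  obtain ⟨hn3, hL, hεn⟩ := hN n hn
  refine ⟨⌊4 * Real.logb (1 / ε) n⌋₊ + 2, ?_, fun s => ?_⟩
  · push_cast
    linarith [Nat.floor_le (by linarith : (0 : ℝ) ≤ 4 * Real.logb (1 / ε) n)]
  have hq : #VB / ((n : ℝ) - 2) ≤ ε ^ (3 / 4 : ℝ) := by
    rw [div_le_iff₀ (cast_sub_two_pos hn3)]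
    linarith
  refine le_trans ?_ (one_sub_pow_le_unifProb_routeSP_eq_dest hn3 hd s _)
  gcongr
  refine pow_le_one_div_pow_of_le_rpow hε0 hε1
    (div_nonneg (Nat.cast_nonneg _) (cast_sub_two_pos hn3).le) hq (Nat.cast_pos.2 (by omega)) ?_
  push_cast
  linarith [Nat.lt_floor_add_one (4 * Real.logb (1 / ε) n)]

end
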